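/- The function G(t) = -ln(∫₀^{E_mx} ρ(E) exp(-μ(E)t) dE) is strictly increasing on ℝ, and hence injective. -/

import Mathlib

open MeasureTheory intervalIntegral

/-- The beam-hardening data function `G(t) = -ln ∫₀^Emx ρ(E) exp(-μ(E) t) dE`
is strictly increasing on ℝ, and hence injective. -/
theorem stmt_0 (Emx : ℝ) (hEmx : 0 < Emx)
    (ρ μ : ℝ → ℝ) (hρc : Continuous ρ)
    (hρ0 : ∀ E ∈ Set.Icc 0 Emx, 0 ≤ ρ E)
    (hρne : ∃ E ∈ Set.Icc 0 Emx, ρ E ≠ 0)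
    (hρint : ∫ E in (0:ℝ)..Emx, ρ E = 1)
    (hμc : Continuous μ) (hμpos : ∀ E ∈ Set.Icc 0 Emx, 0 < μ E)
    (G : ℝ → ℝ)
    (hG : ∀ t, G t = -Real.log (∫ E in (0:ℝ)..Emx, ρ E * Real.exp (-(μ E * t)))) :
    StrictMono G ∧ Function.Injective G := by
  obtain ⟨E₀, hE₀, hρE₀'⟩ := hρne
  have hρE₀ : 0 < ρ E₀ := lt_of_le_of_ne (hρ0 E₀ hE₀) (Ne.symm hρE₀')
  have hcont : ∀ t : ℝ, ContinuousOn (fun E => ρ E * Real.exp (-(μ E * t)))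
      (Set.Icc 0 Emx) := fun t =>
    (hρc.mul ((hμc.mul continuous_const).neg.rexp)).continuousOn
  have hIpos : ∀ t : ℝ, 0 < ∫ E in (0:ℝ)..Emx, ρ E * Real.exp (-(μ E * t)) := fun t =>
    intervalIntegral.integral_pos hEmx (hcont t)
      (fun E hE => mul_nonneg (hρ0 E ⟨hE.1.le, hE.2⟩) (Real.exp_pos _).le)
      ⟨E₀, hE₀, mul_pos hρE₀ (Real.exp_pos _)⟩
  have hmono : StrictMono G := by
    intro s t hst
    rw [hG s, hG t, neg_lt_neg_iff]
    apply Real.log_lt_log (hIpos t)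
    apply intervalIntegral.integral_lt_integral_of_continuousOn_of_le_of_exists_lt hEmx
      (hcont t) (hcont s)
    · intro E hE
      have hμE : 0 < μ E := hμpos E ⟨hE.1.le, hE.2⟩
      exact mul_le_mul_of_nonneg_left
        (Real.exp_le_exp.2 (by nlinarith)) (hρ0 E ⟨hE.1.le, hE.2⟩)
    · refine ⟨E₀, hE₀, ?_⟩
      have hμE : 0 < μ E₀ := hμpos E₀ hE₀
      exact mul_lt_mul_of_pos_left (Real.exp_lt_exp.2 (by nlinarith)) hρE₀
  exact ⟨hmono, hmono.injective⟩
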